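/- arXiv:0801.4616 — 2 statements merged into one kernel-verified Lean document; each statement's English description precedes it below -/
import Mathlib

section
/- No linearly recurrent minimal Cantor system is strongly mixing with respect to its unique invariant measure. More precisely, if $(X,T,\mu)$ is linearly recurrent with constant $L$ and $m$ is chosen so that $\mu(B_1(m))<1/L^2$, then $\liminf_{n\to\infty}\mu\big(B_1(m)\cap T^{h_1(n)}B_1(m)\big)\ge \frac{1}{L^2}\mu(B_1(m)) > \mu(B_1(m))^2$. -/
open MeasureTheory Filter Topology

/-- A nested sequence of clopen Kakutani–Rokhlin partitions of `(X,T)`,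
satisfying (KR1)-(KR6) and the linear recurrence condition (LR) with constant `L`.
The pieces of the `n`-th partition are the sets `T^{-j}(base n k)` for
`k : Fin (C n)` and `j < hgt n k`. -/
structure LRCantor (X : Type*) [TopologicalSpace X] (T : X ≃ₜ X) (L : ℕ) : Type _ where
  C : ℕ → ℕ
  hgt : (n : ℕ) → Fin (C n) → ℕ
  base : (n : ℕ) → Fin (C n) → Set X
  C_pos : ∀ n, 0 < C n
  hgt_pos : ∀ n k, 0 < hgt n k
  clopen : ∀ n k, IsClopen (base n k)
  C_zero : C 0 = 1
  hgt_zero : ∀ k, hgt 0 k = 1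
  base_zero : ∀ k, base 0 k = Set.univ
  pieces_disjoint : ∀ n (k k' : Fin (C n)) (j j' : ℕ), j < hgt n k → j' < hgt n k' →
    (k, j) ≠ (k', j') → Disjoint ((⇑T)^[j] ⁻¹' base n k) ((⇑T)^[j'] ⁻¹' base n k')
  pieces_cover : ∀ n (x : X), ∃ (k : Fin (C n)) (j : ℕ), j < hgt n k ∧ (⇑T)^[j] x ∈ base n k
  KR1 : ∀ n, (⋃ k, base (n+1) k) ⊆ ⋃ k, base n k
  KR2 : ∀ n (k : Fin (C (n+1))) (j : ℕ), j < hgt (n+1) k →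
    ∃ (k' : Fin (C n)) (j' : ℕ), j' < hgt n k' ∧
      (⇑T)^[j] ⁻¹' base (n+1) k ⊆ (⇑T)^[j'] ⁻¹' base n k'
  KR3 : ∃ x : X, (⋂ n, ⋃ k, base n k) = {x}
  KR4 : ∀ (U : Set X) (x : X), IsOpen U → x ∈ U →
    ∃ (n : ℕ) (k : Fin (C n)) (j : ℕ), j < hgt n k ∧ x ∈ (⇑T)^[j] ⁻¹' base n k ∧
      (⇑T)^[j] ⁻¹' base n k ⊆ U
  KR5 : ∀ n (l : Fin (C (n+1))) (k : Fin (C n)),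
    ∃ j, j < hgt (n+1) l ∧ (⇑T)^[j] ⁻¹' base (n+1) l ⊆ base n k
  KR6 : ∀ n, (⋃ k, base (n+1) k) ⊆ base n ⟨0, C_pos n⟩
  LR : ∀ n (l : Fin (C (n+1))) (k : Fin (C n)), hgt (n+1) l ≤ L * hgt n k

namespace LRCantor

variable {X : Type*} [TopologicalSpace X] {T : X ≃ₜ X} {L : ℕ}

/-- The incidence numbers `m_{l,k}(n+1)` of the sequence of partitions. -/
noncomputable def m (S : LRCantor X T L) (n : ℕ) (l : Fin (S.C (n+1))) (k : Fin (S.C n)) : ℕ :=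
  Set.ncard {j : ℕ | j < S.hgt (n+1) l ∧ (⇑T)^[j] ⁻¹' S.base (n+1) l ⊆ S.base n k}

end LRCantor

/-- `lam` is a continuous eigenvalue of `(X,T)`. -/
def IsContinuousEigenvalue {X : Type*} [TopologicalSpace X] (T : X ≃ₜ X) (lam : ℂ) : Prop :=
  ∃ f : X → ℂ, Continuous f ∧ f ≠ 0 ∧ ∀ x, f (T x) = lam * f x

/-- `lam` is a measure-theoretical eigenvalue of `(X,T,μ)`. -/
def IsEigenvalue {X : Type*} [TopologicalSpace X] [MeasurableSpace X] (T : X ≃ₜ X)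
    (μ : Measure X) (lam : ℂ) : Prop :=
  ∃ f : X → ℂ, MemLp f 2 μ ∧ ¬ (f =ᵐ[μ] 0) ∧
    (fun x => f (T x)) =ᵐ[μ] fun x => lam * f x

/-- `(X,T)` is a minimal homeomorphism: the only closed invariant subsets are `∅` and `X`. -/
def IsMinimal {X : Type*} [TopologicalSpace X] (T : X ≃ₜ X) : Prop :=
  ∀ A : Set X, IsClosed A → (⇑T) '' A = A → A = ∅ ∨ A = Set.univ

variable {X : Type*} [TopologicalSpace X] [CompactSpace X] [TopologicalSpace.MetrizableSpace X]
  [TotallyDisconnectedSpace X] [PerfectSpace X] [Nonempty X]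
variable [MeasurableSpace X] [BorelSpace X]

/-!
Write `B = B_1(m)`. For `n ≥ m` every level of every tower of level `n` lies in `B` or misses it,
and each tower of level `n + 1` is a stack of whole towers of level `n` containing a copy of each
of them (KR5). By Kac's formula `∑ₖ hₖ(n) μ(Bₖ(n)) = 1` some tower of level `n` has `B`-density at
least `μ B`, and by (LR) it fills at least a `1/L`-th of every tower of level `n + 1`. So if `e`
bounds all `B`-densities at level `n` from below, then `e + (μ B - e) / L` bounds them at level
`n + 1`, and the densities at level `m + i` are at least `μ B (1 - (1 - 1/L)^i)`.

The first tower of level `n + 1` begins with a copy of the first tower of level `n` and is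
followed by a base of level `n + 1`, which lies in `B_1(n)`. Hence `T^{-h_1(n+1)}` maps the
`B`-levels of that copy into `B`, so `μ(B ∩ T^{h_1(n+1)} B)` is at least the `B`-density of the
first tower of level `n` times `h_1(n) μ(B_1(n+1)) ≥ 1/L²` (Kac and (LR) again).
-/

open Finset

namespace LRCantor

variable {X : Type*} [TopologicalSpace X] {T : X ≃ₜ X} {L : ℕ} (S : LRCantor X T L)

abbrev first (n : ℕ) : Fin (S.C n) := ⟨0, S.C_pos n⟩

def piece (n : ℕ) (k : Fin (S.C n)) (j : ℕ) : Set X := (⇑T)^[j] ⁻¹' S.base n k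

theorem one_le_L (S : LRCantor X T L) : 1 ≤ L := by
  have hLR := S.LR 0 (S.first 1) (S.first 0)
  have := S.hgt_pos 1 (S.first 1)
  exact Nat.one_le_iff_ne_zero.2 fun hL => by simp [hL] at hLR; omega

theorem piece_add (n : ℕ) (k : Fin (S.C n)) (a r : ℕ) :
    S.piece n k (a + r) = (⇑T)^[r] ⁻¹' S.piece n k a := by
  simp only [piece, Function.iterate_add, Set.preimage_comp]

theorem mem_piece_succ {n : ℕ} {k : Fin (S.C n)} {j : ℕ} {x : X} :
    x ∈ S.piece n k (j + 1) ↔ T x ∈ S.piece n k j := by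
  simp only [piece, Set.mem_preimage, Function.iterate_succ_apply]

theorem measurableSet_piece [MeasurableSpace X] [OpensMeasurableSpace X]
    (n : ℕ) (k : Fin (S.C n)) (j : ℕ) : MeasurableSet (S.piece n k j) :=
  ((S.clopen n k).isOpen.preimage (T.continuous.iterate j)).measurableSet

theorem eq_of_mem_piece {n : ℕ} {k k' : Fin (S.C n)} {j j' : ℕ} {x : X}
    (hj : j < S.hgt n k) (hj' : j' < S.hgt n k')
    (hx : x ∈ S.piece n k j) (hx' : x ∈ S.piece n k' j') : k = k' ∧ j = j' := by
  by_contra hne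
  exact Set.disjoint_left.1
    (S.pieces_disjoint n k k' j j' hj hj' fun h => hne (by simpa using h)) hx hx'

theorem base_nonempty [Nonempty X] (n : ℕ) (k : Fin (S.C n)) : (S.base n k).Nonempty := by
  obtain ⟨l, j, -, hx⟩ := S.pieces_cover (n + 1) (Classical.arbitrary X)
  obtain ⟨i, -, hsub⟩ := S.KR5 n l k
  obtain ⟨y, hy⟩ := T.surjective.iterate i ((⇑T)^[j] (Classical.arbitrary X))
  exact ⟨y, hsub (show (⇑T)^[i] y ∈ S.base (n + 1) l by rwa [hy])⟩

theorem piece_nonempty [Nonempty X] (n : ℕ) (k : Fin (S.C n)) (j : ℕ) :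
    (S.piece n k j).Nonempty :=
  (S.base_nonempty n k).preimage (T.surjective.iterate j)

theorem base_succ_subset (n : ℕ) (l : Fin (S.C (n + 1))) :
    S.base (n + 1) l ⊆ S.base n (S.first n) :=
  fun _ hx => S.KR6 n (Set.mem_iUnion.2 ⟨l, hx⟩)

theorem exists_mem_base_of_mem_piece_hgt {n : ℕ} {k : Fin (S.C n)} {x : X}
    (hx : x ∈ S.piece n k (S.hgt n k)) : ∃ k', x ∈ S.base n k' := by
  obtain ⟨k', j, hj, hxj⟩ := S.pieces_cover n x
  refine ⟨k', ?_⟩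
  obtain _ | j := j
  · exact hxj
  obtain ⟨h, hh⟩ := Nat.exists_eq_add_one_of_ne_zero (S.hgt_pos n k).ne'
  rw [hh, mem_piece_succ] at hx
  obtain ⟨rfl, rfl⟩ := S.eq_of_mem_piece (by omega) (by omega) (S.mem_piece_succ.1 hxj) hx
  omega

theorem piece_hgt_subset_base_first (n : ℕ) (l : Fin (S.C (n + 1))) :
    S.piece (n + 1) l (S.hgt (n + 1) l) ⊆ S.base n (S.first n) := fun _ hx =>
  let ⟨_, hk⟩ := S.exists_mem_base_of_mem_piece_hgt hx
  S.base_succ_subset n _ hk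

theorem piece_add_subset_piece {n : ℕ} {l : Fin (S.C (n + 1))} {a : ℕ} {k : Fin (S.C n)}
    (h : S.piece (n + 1) l a ⊆ S.base n k) (r : ℕ) :
    S.piece (n + 1) l (a + r) ⊆ S.piece n k r := by
  rw [piece_add]
  exact Set.preimage_mono h

theorem add_hgt_le [Nonempty X] {n : ℕ} {l : Fin (S.C (n + 1))} {a : ℕ} {k : Fin (S.C n)}
    (h : S.piece (n + 1) l a ⊆ S.base n k) (ha : a < S.hgt (n + 1) l) :
    a + S.hgt n k ≤ S.hgt (n + 1) l := by
  by_contra! hlt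
  obtain ⟨x, hx⟩ := S.piece_nonempty (n + 1) l (S.hgt (n + 1) l)
  have hxk : x ∈ S.piece n k (S.hgt (n + 1) l - a) :=
    S.piece_add_subset_piece h _ (by rwa [Nat.add_sub_cancel' ha.le])
  have := S.eq_of_mem_piece (j' := 0) (by omega) (S.hgt_pos n _) hxk
    (S.piece_hgt_subset_base_first n l hx)
  omega

theorem exists_piece_add_hgt_subset_base [Nonempty X] {n : ℕ} {l : Fin (S.C (n + 1))} {a : ℕ}
    {k : Fin (S.C n)} (h : S.piece (n + 1) l a ⊆ S.base n k) (ha : a < S.hgt (n + 1) l) :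
    ∃ k', S.piece (n + 1) l (a + S.hgt n k) ⊆ S.base n k' := by
  rcases (S.add_hgt_le h ha).eq_or_lt with heq | hlt
  · exact ⟨S.first n, heq ▸ S.piece_hgt_subset_base_first n l⟩
  obtain ⟨k', j, hj, hsub⟩ := S.KR2 n l _ hlt
  obtain ⟨x, hx⟩ := S.piece_nonempty (n + 1) l (a + S.hgt n k)
  obtain ⟨k'', hk''⟩ := S.exists_mem_base_of_mem_piece_hgt (S.piece_add_subset_piece h _ hx)
  obtain ⟨-, rfl⟩ := S.eq_of_mem_piece (j' := 0) hj (S.hgt_pos n k'') (hsub hx) hk''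
  exact ⟨k', hsub⟩

theorem hgt_first_le [Nonempty X] (n : ℕ) (l : Fin (S.C (n + 1))) :
    S.hgt n (S.first n) ≤ S.hgt (n + 1) l := by
  simpa using S.add_hgt_le (a := 0) (S.base_succ_subset n l) (S.hgt_pos _ l)

theorem exists_piece_subset_piece {m n : ℕ} (hmn : m ≤ n) {k : Fin (S.C n)} {j : ℕ}
    (hj : j < S.hgt n k) : ∃ k' j', j' < S.hgt m k' ∧ S.piece n k j ⊆ S.piece m k' j' := by
  induction n, hmn using Nat.le_induction generalizing j with
  | base => exact ⟨k, j, hj, subset_rfl⟩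
  | succ n _ ih =>
    obtain ⟨k₁, j₁, hj₁, hsub₁⟩ := S.KR2 n k j hj
    obtain ⟨k', j', hj', hsub⟩ := ih hj₁
    exact ⟨k', j', hj', hsub₁.trans hsub⟩

theorem piece_subset_or_disjoint {m n : ℕ} (hmn : m ≤ n) {k : Fin (S.C n)} {j : ℕ}
    (hj : j < S.hgt n k) :
    S.piece n k j ⊆ S.base m (S.first m) ∨ Disjoint (S.piece n k j) (S.base m (S.first m)) := by
  obtain ⟨k', j', hj', hsub⟩ := S.exists_piece_subset_piece hmn hj
  by_cases hB : k' = S.first m ∧ j' = 0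
  · obtain ⟨rfl, rfl⟩ := hB
    exact .inl hsub
  · exact .inr <| Set.disjoint_left.2 fun x hx hxB =>
      hB (S.eq_of_mem_piece (j' := 0) hj' (S.hgt_pos m _) (hsub hx) hxB)

open scoped Classical in
noncomputable def levelsFrom (m n : ℕ) (k : Fin (S.C n)) (a : ℕ) : Finset ℕ :=
  {j ∈ Ico a (S.hgt n k) | S.piece n k j ⊆ S.base m (S.first m)}

theorem lt_hgt_of_mem_levelsFrom {m n : ℕ} {k : Fin (S.C n)} {a j : ℕ}
    (hj : j ∈ S.levelsFrom m n k a) : j < S.hgt n k := by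
  classical
  exact (mem_Ico.1 (mem_filter.1 hj).1).2

theorem piece_subset_of_mem_levelsFrom {m n : ℕ} {k : Fin (S.C n)} {a j : ℕ}
    (hj : j ∈ S.levelsFrom m n k a) : S.piece n k j ⊆ S.base m (S.first m) := by
  classical
  exact (mem_filter.1 hj).2

section Tiling

variable [Nonempty X] {m n : ℕ} {l : Fin (S.C (n + 1))} {e : ℝ}

theorem piece_add_subset_base_first_iff (hmn : m ≤ n) {a : ℕ} {k : Fin (S.C n)}
    (h : S.piece (n + 1) l a ⊆ S.base n k) {r : ℕ} (hr : r < S.hgt n k) :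
    S.piece (n + 1) l (a + r) ⊆ S.base m (S.first m) ↔
      S.piece n k r ⊆ S.base m (S.first m) := by
  refine ⟨fun hB => ?_, (S.piece_add_subset_piece h r).trans⟩
  refine (S.piece_subset_or_disjoint hmn hr).resolve_right fun hdisj => ?_
  obtain ⟨x, hx⟩ := S.piece_nonempty (n + 1) l (a + r)
  exact Set.disjoint_left.1 hdisj (S.piece_add_subset_piece h r hx) (hB hx)

theorem card_levelsFrom_eq_add (hmn : m ≤ n) {a : ℕ} {k : Fin (S.C n)}
    (h : S.piece (n + 1) l a ⊆ S.base n k) (ha : a < S.hgt (n + 1) l) :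
    #(S.levelsFrom m (n + 1) l a) =
      #(S.levelsFrom m n k 0) + #(S.levelsFrom m (n + 1) l (a + S.hgt n k)) := by
  classical
  have hle := S.add_hgt_le h ha
  have hblock : {i ∈ Ico a (a + S.hgt n k) | S.piece (n + 1) l i ⊆ S.base m (S.first m)} =
      (S.levelsFrom m n k 0).map (addLeftEmbedding a) := by
    have hIco : Ico a (a + S.hgt n k) = (Ico 0 (S.hgt n k)).map (addLeftEmbedding a) := by
      rw [map_add_left_Ico, Nat.add_zero]
    rw [hIco, filter_map, levelsFrom]
    congr 1
    refine filter_congr fun r hr => ?_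
    exact S.piece_add_subset_base_first_iff hmn h (mem_Ico.1 hr).2
  rw [levelsFrom, ← Ico_union_Ico_eq_Ico (Nat.le_add_right a _) hle, filter_union,
    card_union_of_disjoint (disjoint_filter_filter (Ico_disjoint_Ico_consecutive _ _ _)),
    hblock, card_map]
  rfl

theorem mul_sub_le_card_levelsFrom (hmn : m ≤ n)
    (he : ∀ k, e * S.hgt n k ≤ #(S.levelsFrom m n k 0)) {a : ℕ} {k : Fin (S.C n)}
    (h : S.piece (n + 1) l a ⊆ S.base n k) (ha : a ≤ S.hgt (n + 1) l) :
    e * (S.hgt (n + 1) l - a : ℝ) ≤ #(S.levelsFrom m (n + 1) l a) := by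
  rcases ha.eq_or_lt with rfl | ha
  · simp
  obtain ⟨k', hk'⟩ := S.exists_piece_add_hgt_subset_base h ha
  have hrest := mul_sub_le_card_levelsFrom hmn he hk' (S.add_hgt_le h ha)
  rw [S.card_levelsFrom_eq_add hmn h ha]
  push_cast at hrest ⊢
  linear_combination hrest + he k
termination_by S.hgt (n + 1) l - a
decreasing_by have := S.hgt_pos n k; omega

theorem mul_sub_add_le_card_levelsFrom (hmn : m ≤ n)
    (he : ∀ k, e * S.hgt n k ≤ #(S.levelsFrom m n k 0)) {a : ℕ} {k : Fin (S.C n)}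
    (h : S.piece (n + 1) l a ⊆ S.base n k) {j : ℕ} {k₀ : Fin (S.C n)} (haj : a ≤ j)
    (hj : j < S.hgt (n + 1) l) (hj₀ : S.piece (n + 1) l j ⊆ S.base n k₀) :
    e * (S.hgt (n + 1) l - a : ℝ) + (#(S.levelsFrom m n k₀ 0) - e * S.hgt n k₀) ≤
      #(S.levelsFrom m (n + 1) l a) := by
  have ha : a < S.hgt (n + 1) l := haj.trans_lt hj
  obtain ⟨k', hk'⟩ := S.exists_piece_add_hgt_subset_base h ha
  rw [S.card_levelsFrom_eq_add hmn h ha]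
  by_cases hja : j < a + S.hgt n k
  · -- the block of level `n` starting at `a` is the copy of tower `k₀` starting at `j`
    obtain ⟨x, hx⟩ := S.piece_nonempty (n + 1) l j
    have hxk : x ∈ S.piece n k (j - a) :=
      S.piece_add_subset_piece h _ (by rwa [Nat.add_sub_cancel' haj])
    obtain ⟨rfl, -⟩ := S.eq_of_mem_piece (j' := 0) (by omega) (S.hgt_pos n k₀) hxk (hj₀ hx)
    have hrest := S.mul_sub_le_card_levelsFrom hmn he hk' (S.add_hgt_le h ha)
    push_cast at hrest ⊢
    linear_combination hrest
  · have hrest := mul_sub_add_le_card_levelsFrom hmn he hk' (by omega) hj hj₀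
    push_cast at hrest ⊢
    linear_combination hrest + he k
termination_by S.hgt (n + 1) l - a
decreasing_by have := S.hgt_pos n k; omega

theorem mul_hgt_add_le_card_levelsFrom (hmn : m ≤ n)
    (he : ∀ k, e * S.hgt n k ≤ #(S.levelsFrom m n k 0)) (l : Fin (S.C (n + 1)))
    (k₀ : Fin (S.C n)) :
    e * S.hgt (n + 1) l + (#(S.levelsFrom m n k₀ 0) - e * S.hgt n k₀) ≤
      #(S.levelsFrom m (n + 1) l 0) := by
  obtain ⟨j, hj, hj₀⟩ := S.KR5 n l k₀
  simpa using
    S.mul_sub_add_le_card_levelsFrom hmn he (a := 0) (S.base_succ_subset n l) j.zero_le hj hj₀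

end Tiling

section Measure

variable [MeasurableSpace X] [OpensMeasurableSpace X] {μ : Measure X}

theorem measureReal_piece (hT : MeasurePreserving T μ μ) (n : ℕ) (k : Fin (S.C n)) (j : ℕ) :
    μ.real (S.piece n k j) = μ.real (S.base n k) :=
  (hT.iterate j).measureReal_preimage (S.clopen n k).isOpen.measurableSet.nullMeasurableSet

theorem measureReal_biUnion_piece [IsFiniteMeasure μ] (hT : MeasurePreserving T μ μ) {n : ℕ}
    {k : Fin (S.C n)} {s : Finset ℕ} (hs : ∀ j ∈ s, j < S.hgt n k) :
    μ.real (⋃ j ∈ s, S.piece n k j) = #s * μ.real (S.base n k) := by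
  rw [measureReal_biUnion_finset (fun j hj j' hj' hne => Set.disjoint_left.2 fun x hx hx' =>
      hne (S.eq_of_mem_piece (hs j hj) (hs j' hj') hx hx').2)
    fun j _ => S.measurableSet_piece n k j]
  simp [S.measureReal_piece hT]

theorem measureReal_iUnion_biUnion_piece [IsFiniteMeasure μ] (hT : MeasurePreserving T μ μ)
    {n : ℕ} (s : Fin (S.C n) → Finset ℕ) (hs : ∀ k, ∀ j ∈ s k, j < S.hgt n k) :
    μ.real (⋃ k, ⋃ j ∈ s k, S.piece n k j) = ∑ k, #(s k) * μ.real (S.base n k) := by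
  rw [measureReal_iUnion_fintype ?_
    (fun k => Finset.measurableSet_biUnion _ fun j _ => S.measurableSet_piece n k j)
    fun _ => measure_ne_top μ _]
  · exact Finset.sum_congr rfl fun k _ => S.measureReal_biUnion_piece hT (hs k)
  · intro k k' hne
    simp only [Function.onFun, Set.disjoint_iUnion_left, Set.disjoint_iUnion_right]
    exact fun j' hj' j hj => Set.disjoint_left.2 fun x hx hx' =>
      hne (S.eq_of_mem_piece (hs k j hj) (hs k' j' hj') hx hx').1

theorem sum_hgt_mul_measureReal_base [IsProbabilityMeasure μ] (hT : MeasurePreserving T μ μ)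
    (n : ℕ) :
    ∑ k, (S.hgt n k : ℝ) * μ.real (S.base n k) = 1 := by
  have hcover : ⋃ k, ⋃ j ∈ range (S.hgt n k), S.piece n k j = Set.univ :=
    Set.eq_univ_of_forall fun x =>
      let ⟨k, j, hj, hx⟩ := S.pieces_cover n x
      Set.mem_iUnion.2 ⟨k, Set.mem_iUnion₂.2 ⟨j, mem_range.2 hj, hx⟩⟩
  have h := S.measureReal_iUnion_biUnion_piece hT (fun k => range (S.hgt n k))
    fun k _ => mem_range.1
  rw [hcover, probReal_univ] at h
  simpa using h.symm

theorem measureReal_base_first_eq [Nonempty X] [IsFiniteMeasure μ]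
    (hT : MeasurePreserving T μ μ) {m n : ℕ} (hmn : m ≤ n) :
    μ.real (S.base m (S.first m)) = ∑ k, #(S.levelsFrom m n k 0) * μ.real (S.base n k) := by
  rw [← S.measureReal_iUnion_biUnion_piece hT _ fun k j => S.lt_hgt_of_mem_levelsFrom]
  congr 1
  refine Set.Subset.antisymm (fun x hx => ?_) ?_
  · obtain ⟨k, j, hj, hxj⟩ := S.pieces_cover n x
    rcases S.piece_subset_or_disjoint hmn hj with hsub | hdisj
    · refine Set.mem_iUnion.2 ⟨k, Set.mem_iUnion₂.2 ⟨j, ?_, hxj⟩⟩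
      classical
      simp [levelsFrom, hj, hsub]
    · exact absurd hx (Set.disjoint_left.1 hdisj hxj)
  · exact Set.iUnion_subset fun k => Set.iUnion₂_subset fun j hj =>
      S.piece_subset_of_mem_levelsFrom hj

theorem exists_measureReal_mul_hgt_le_card [Nonempty X] [IsProbabilityMeasure μ]
    (hT : MeasurePreserving T μ μ) {m n : ℕ} (hmn : m ≤ n) :
    ∃ k, μ.real (S.base m (S.first m)) * S.hgt n k ≤ #(S.levelsFrom m n k 0) := by
  set density : Fin (S.C n) → ℝ := fun k => #(S.levelsFrom m n k 0) / S.hgt n k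
  have hpos : ∀ k, (0 : ℝ) < S.hgt n k := fun k => by exact_mod_cast S.hgt_pos n k
  have : Nonempty (Fin (S.C n)) := ⟨S.first n⟩
  obtain ⟨k, hk⟩ := Finite.exists_max density
  refine ⟨k, (le_div_iff₀ (hpos k)).1 ?_⟩
  calc μ.real (S.base m (S.first m))
      = ∑ k', density k' * (S.hgt n k' * μ.real (S.base n k')) := by
        rw [S.measureReal_base_first_eq hT hmn]
        refine Finset.sum_congr rfl fun k' _ => ?_
        have := (hpos k').ne'
        simp only [density]
        field_simp
    _ ≤ ∑ k', density k * (S.hgt n k' * μ.real (S.base n k')) :=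
        sum_le_sum fun k' _ => by gcongr; exact hk k'
    _ = density k := by rw [← mul_sum, S.sum_hgt_mul_measureReal_base hT, mul_one]

theorem one_le_L_mul_hgt_mul_measureReal_base_first [IsProbabilityMeasure μ]
    (hT : MeasurePreserving T μ μ) (n : ℕ) :
    1 ≤ L * S.hgt n (S.first n) * μ.real (S.base n (S.first n)) := by
  have hdisj : Pairwise fun l l' => Disjoint (S.base (n + 1) l) (S.base (n + 1) l') :=
    fun l l' hne => Set.disjoint_left.2 fun x hx hx' =>
      hne (S.eq_of_mem_piece (j := 0) (j' := 0) (S.hgt_pos _ l) (S.hgt_pos _ l') hx hx').1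
  calc (1 : ℝ) = ∑ l, (S.hgt (n + 1) l : ℝ) * μ.real (S.base (n + 1) l) :=
        (S.sum_hgt_mul_measureReal_base hT _).symm
    _ ≤ ∑ l, (L * S.hgt n (S.first n) : ℝ) * μ.real (S.base (n + 1) l) :=
        sum_le_sum fun l _ => by gcongr; exact_mod_cast S.LR n l _
    _ = L * S.hgt n (S.first n) * μ.real (⋃ l, S.base (n + 1) l) := by
        rw [← mul_sum, measureReal_iUnion_fintype hdisj
          fun l => (S.clopen (n + 1) l).isOpen.measurableSet]
    _ ≤ L * S.hgt n (S.first n) * μ.real (S.base n (S.first n)) :=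
        mul_le_mul_of_nonneg_left
          (measureReal_mono (Set.iUnion_subset (S.base_succ_subset n))) (by positivity)

variable [IsProbabilityMeasure μ] [Nonempty X] {m n : ℕ} {e : ℝ}

theorem mul_hgt_le_card_levelsFrom_succ (hT : MeasurePreserving T μ μ) (hmn : m ≤ n)
    (he : ∀ k, e * S.hgt n k ≤ #(S.levelsFrom m n k 0)) (l : Fin (S.C (n + 1))) :
    (e + (μ.real (S.base m (S.first m)) - e) / L) * S.hgt (n + 1) l ≤
      #(S.levelsFrom m (n + 1) l 0) := by
  obtain ⟨k, hk⟩ := S.exists_measureReal_mul_hgt_le_card hT hmn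
  have hLR : (S.hgt (n + 1) l : ℝ) ≤ L * S.hgt n k := by exact_mod_cast S.LR n l k
  have hL : (0 : ℝ) < L := by exact_mod_cast S.one_le_L
  have hgain : (μ.real (S.base m (S.first m)) - e) / L * S.hgt (n + 1) l ≤
      #(S.levelsFrom m n k 0) - e * S.hgt n k := by
    rw [div_mul_eq_mul_div, div_le_iff₀ hL]
    rcases le_total e (μ.real (S.base m (S.first m))) with h | h <;> nlinarith [he k]
  linear_combination S.mul_hgt_add_le_card_levelsFrom hmn he l k + hgain

theorem mul_hgt_le_card_levelsFrom (hT : MeasurePreserving T μ μ) (i : ℕ)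
    (k : Fin (S.C (m + i))) :
    μ.real (S.base m (S.first m)) * (1 - (1 - 1 / L : ℝ) ^ i) * S.hgt (m + i) k ≤
      #(S.levelsFrom m (m + i) k 0) := by
  induction i with
  | zero => simp
  | succ i ih =>
    show _ * (S.hgt (m + i + 1) k : ℝ) ≤ (#(S.levelsFrom m (m + i + 1) k 0) : ℝ)
    convert S.mul_hgt_le_card_levelsFrom_succ hT (m.le_add_right i) ih k using 2
    ring

theorem card_mul_measureReal_le_measureReal_inter (hT : MeasurePreserving T μ μ) :
    #(S.levelsFrom m n (S.first n) 0) * μ.real (S.base (n + 1) (S.first (n + 1))) ≤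
      μ.real (S.base m (S.first m) ∩
        (⇑T)^[S.hgt (n + 1) (S.first (n + 1))] '' S.base m (S.first m)) := by
  rw [← S.measureReal_biUnion_piece hT fun j hj =>
    (S.lt_hgt_of_mem_levelsFrom hj).trans_le (S.hgt_first_le n _)]
  refine measureReal_mono (Set.iUnion₂_subset fun j hj y hy => ?_)
  have hB := S.piece_subset_of_mem_levelsFrom hj
  obtain ⟨x, rfl⟩ := T.surjective.iterate (S.hgt (n + 1) (S.first (n + 1))) y
  refine ⟨hB (S.base_succ_subset n _ hy), x, hB ?_, rfl⟩
  refine S.piece_hgt_subset_base_first n (S.first (n + 1)) ?_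
  simpa only [piece, Set.mem_preimage, ← Function.iterate_add_apply, add_comm] using hy

theorem div_sq_le_measureReal_inter (hT : MeasurePreserving T μ μ)
    (he : ∀ k, e * S.hgt n k ≤ #(S.levelsFrom m n k 0)) :
    e / L ^ 2 ≤ μ.real (S.base m (S.first m) ∩
      (⇑T)^[S.hgt (n + 1) (S.first (n + 1))] '' S.base m (S.first m)) := by
  refine le_trans ?_ (S.card_mul_measureReal_le_measureReal_inter hT)
  set β := μ.real (S.base (n + 1) (S.first (n + 1)))
  have hL : (0 : ℝ) < L := by exact_mod_cast S.one_le_L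
  have hβ : 1 ≤ L ^ 2 * S.hgt n (S.first n) * β :=
    calc (1 : ℝ) ≤ L * S.hgt (n + 1) (S.first (n + 1)) * β :=
          S.one_le_L_mul_hgt_mul_measureReal_base_first hT (n + 1)
      _ ≤ L * (L * S.hgt n (S.first n)) * β := by gcongr; exact_mod_cast S.LR n _ _
      _ = _ := by ring
  rw [div_le_iff₀ (by positivity)]
  rcases le_total 0 e with he0 | he0
  · calc e ≤ e * (L ^ 2 * S.hgt n (S.first n) * β) := le_mul_of_one_le_right he0 hβ
      _ = e * S.hgt n (S.first n) * (β * L ^ 2) := by ring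
      _ ≤ #(S.levelsFrom m n (S.first n) 0) * (β * L ^ 2) := by gcongr; exact he _
      _ = _ := by ring
  · exact he0.trans (by positivity)

end Measure

end LRCantor

theorem le_liminf_of_tendsto_of_le_add {f g : ℕ → ℝ} {c b : ℝ} (k : ℕ)
    (hg : Tendsto g atTop (𝓝 c)) (hgf : ∀ i, g i ≤ f (i + k)) (hf : ∀ n, f n ≤ b) :
    c ≤ liminf f atTop :=
  calc c = liminf g atTop := hg.liminf_eq.symm
    _ ≤ liminf (fun i => f (i + k)) atTop :=
        liminf_le_liminf (.of_forall hgf) hg.isBoundedUnder_ge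
          (isCoboundedUnder_ge_of_le atTop fun _ => hf _)
    _ = liminf f atTop := liminf_nat_add f k

theorem not_stronglyMixing_of_linearlyRecurrent_general
    (T : X ≃ₜ X) {L : ℕ} (S : LRCantor X T L)
    (μ : Measure X) [IsProbabilityMeasure μ] (hinv : MeasurePreserving T μ μ)
    (m : ℕ) (hm : (μ (S.base m ⟨0, S.C_pos m⟩)).toReal < 1 / (L : ℝ) ^ 2) :
    (1 / (L : ℝ) ^ 2) * (μ (S.base m ⟨0, S.C_pos m⟩)).toReal ≤
      Filter.atTop.liminf (fun n : ℕ =>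
        (μ (S.base m ⟨0, S.C_pos m⟩ ∩
          (⇑T)^[S.hgt n ⟨0, S.C_pos n⟩] '' S.base m ⟨0, S.C_pos m⟩)).toReal) ∧
    (μ (S.base m ⟨0, S.C_pos m⟩)).toReal ^ 2 <
      (1 / (L : ℝ) ^ 2) * (μ (S.base m ⟨0, S.C_pos m⟩)).toReal := by
  simp only [← measureReal_def] at hm ⊢
  set μB := μ.real (S.base m (S.first m))
  have hL : (0 : ℝ) < L := by exact_mod_cast S.one_le_L
  have hμB : 0 < μB := pos_of_mul_pos_right
    (one_pos.trans_le (S.one_le_L_mul_hgt_mul_measureReal_base_first hinv m)) (by positivity)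
  refine ⟨?_, by nlinarith⟩
  set r : ℝ := 1 - 1 / L
  have hlim : Tendsto (fun i => μB * (1 - r ^ i) / L ^ 2) atTop (𝓝 (1 / L ^ 2 * μB)) := by
    have h1L : 1 / (L : ℝ) ≤ 1 := by rw [div_le_one hL]; exact_mod_cast S.one_le_L
    have hr : Tendsto (fun i => r ^ i) atTop (𝓝 0) :=
      tendsto_pow_atTop_nhds_zero_of_lt_one (sub_nonneg.2 h1L) (sub_lt_self 1 (by positivity))
    convert ((hr.const_sub 1).const_mul μB).div_const ((L : ℝ) ^ 2) using 2
    ring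
  refine le_liminf_of_tendsto_of_le_add (m + 1) hlim (fun i => ?_) fun _ => measureReal_le_one
  rw [show i + (m + 1) = m + i + 1 by omega]
  exact S.div_sq_le_measureReal_inter hinv (S.mul_hgt_le_card_levelsFrom hinv i)

/-- A linearly recurrent minimal Cantor system is not strongly mixing:
if `μ(B_1(m)) < 1/L²` then
`liminf_n μ(B_1(m) ∩ T^{h_1(n)} B_1(m)) ≥ μ(B_1(m))/L² > μ(B_1(m))²`. -/
theorem not_stronglyMixing_of_linearlyRecurrent
    (T : X ≃ₜ X) (hmin : IsMinimal T) {L : ℕ} (S : LRCantor X T L)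
    (μ : Measure X) [IsProbabilityMeasure μ] (hinv : MeasurePreserving T μ μ)
    (m : ℕ) (hm : (μ (S.base m ⟨0, S.C_pos m⟩)).toReal < 1 / (L : ℝ) ^ 2) :
    (1 / (L : ℝ) ^ 2) * (μ (S.base m ⟨0, S.C_pos m⟩)).toReal ≤
      Filter.atTop.liminf (fun n : ℕ =>
        (μ (S.base m ⟨0, S.C_pos m⟩ ∩
          (⇑T)^[S.hgt n ⟨0, S.C_pos n⟩] '' S.base m ⟨0, S.C_pos m⟩)).toReal) ∧
    (μ (S.base m ⟨0, S.C_pos m⟩)).toReal ^ 2 <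
      (1 / (L : ℝ) ^ 2) * (μ (S.base m ⟨0, S.C_pos m⟩)).toReal :=
  not_stronglyMixing_of_linearlyRecurrent_general T S μ hinv m hm
end

section
/- Let $(X,T,\mu)$ be a linearly recurrent minimal Cantor system with constant $L$, and let $\lambda\in\mathbb{C}$ satisfy $\sum_{n=1}^\infty \max_{1\le k\le C(n)} |\lambda^{h_k(n)}-1| < \infty$. Then $\lambda$ is a continuous eigenvalue of $(X,T)$: there exists a continuous function $f:X\to\mathbb{C}$, $f\ne 0$, with $f\circ T = \lambda f$. -/
/-!
Let `r_n(x)` be the level of `x` in the `n`-th partition, i.e. the number of steps `T` needs to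
bring `x` into the base of its tower, and `ε_n = max_k |λ^{h_k(n)} - 1|`. Summability forces
`ε_n → 0`, hence `|λ| = 1`. The locally constant functions `f_n = λ^{-r_n}` satisfy
`f_n ∘ T = λ f_n` off the bases, and on them the defect is `|λ^{-h_k(n)} - 1| ≤ ε_n`.
Since `r_{n+1} - r_n` is a sum of at most `L` heights `h_k(n)`, `|f_{n+1} - f_n| ≤ L ε_n`,
so `f_n` converges uniformly to a continuous `f` of modulus one with `f ∘ T = λ f`.
-/

open MeasureTheory Filter Topology

section NormOne

variable {𝕜 : Type*} [NormedDivisionRing 𝕜]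

lemma abs_one_sub_norm_le_norm_pow_sub_one (z : 𝕜) {m : ℕ} (hm : 0 < m) :
    |1 - ‖z‖| ≤ ‖z ^ m - 1‖ := by
  have hpow : |1 - ‖z‖| ≤ |1 - ‖z‖ ^ m| := by
    rcases le_total 1 ‖z‖ with h | h
    · have := le_self_pow₀ h hm.ne'
      rw [abs_of_nonpos (by linarith), abs_of_nonpos (by linarith)]
      linarith
    · have := pow_le_of_le_one (norm_nonneg z) h hm.ne'
      rw [abs_of_nonneg (by linarith), abs_of_nonneg (by linarith)]
      linarith
  calc |1 - ‖z‖| ≤ |1 - ‖z‖ ^ m| := hpow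
    _ = |‖z ^ m‖ - ‖(1 : 𝕜)‖| := by rw [norm_pow, norm_one, abs_sub_comm]
    _ ≤ ‖z ^ m - 1‖ := abs_norm_sub_norm_le _ _

lemma norm_eq_one_of_tendsto_norm_pow_sub_one {z : 𝕜} {m : ℕ → ℕ} (hm : ∀ n, 0 < m n)
    (h : Tendsto (fun n => ‖z ^ m n - 1‖) atTop (𝓝 0)) : ‖z‖ = 1 := by
  have := ge_of_tendsto' h fun n => abs_one_sub_norm_le_norm_pow_sub_one z (hm n)
  exact (sub_eq_zero.mp (abs_eq_zero.mp (le_antisymm this (abs_nonneg _)))).symm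

lemma norm_inv_pow_sub_one {z : 𝕜} (hz : ‖z‖ = 1) (m : ℕ) : ‖z⁻¹ ^ m - 1‖ = ‖z ^ m - 1‖ := by
  have hz0 : z ≠ 0 := norm_ne_zero_iff.mp (by rw [hz]; exact one_ne_zero)
  have : z⁻¹ ^ m - 1 = -(z⁻¹ ^ m * (z ^ m - 1)) := by
    rw [mul_sub, inv_pow, inv_mul_cancel₀ (pow_ne_zero m hz0), mul_one]; abel
  rw [this, norm_neg, norm_mul, norm_pow, norm_inv, hz, inv_one, one_pow, one_mul]

lemma norm_pow_add_sub_one_le {z : 𝕜} (hz : ‖z‖ = 1) (a b : ℕ) :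
    ‖z ^ (a + b) - 1‖ ≤ ‖z ^ a - 1‖ + ‖z ^ b - 1‖ := by
  have : z ^ (a + b) - 1 = z ^ a * (z ^ b - 1) + (z ^ a - 1) := by rw [pow_add]; noncomm_ring
  calc ‖z ^ (a + b) - 1‖ ≤ ‖z ^ a * (z ^ b - 1)‖ + ‖z ^ a - 1‖ := this ▸ norm_add_le _ _
    _ = ‖z ^ b - 1‖ + ‖z ^ a - 1‖ := by rw [norm_mul, norm_pow, hz, one_pow, one_mul]
    _ = _ := add_comm _ _

lemma norm_pow_sum_sub_one_le {z : 𝕜} (hz : ‖z‖ = 1) {l : List ℕ} {ε : ℝ}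
    (hl : ∀ a ∈ l, ‖z ^ a - 1‖ ≤ ε) : ‖z ^ l.sum - 1‖ ≤ l.length * ε := by
  induction l with
  | nil => simp
  | cons a l ih =>
    simp only [List.forall_mem_cons] at hl
    calc ‖z ^ (a + l.sum) - 1‖ ≤ ‖z ^ a - 1‖ + ‖z ^ l.sum - 1‖ := norm_pow_add_sub_one_le hz _ _
      _ ≤ ε + l.length * ε := add_le_add hl.1 (ih hl.2)
      _ = (a :: l).length * ε := by push_cast [List.length_cons]; ring

end NormOne

section ApproximateEigenfunctions

variable {X R : Type*} [NormedRing R]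

lemma exists_continuous_tendsto_of_norm_sub_le [TopologicalSpace X] [CompleteSpace R]
    {f : ℕ → X → R} (hf : ∀ n, Continuous (f n)) {δ : ℕ → ℝ} (hδ : Summable δ)
    (hstep : ∀ n x, ‖f (n + 1) x - f n x‖ ≤ δ n) :
    ∃ g : X → R, Continuous g ∧ ∀ x, Tendsto (fun n => f n x) atTop (𝓝 (g x)) := by
  refine ⟨fun x => f 0 x + ∑' n, (f (n + 1) x - f n x),
    (hf 0).add (continuous_tsum (fun n => (hf (n + 1)).sub (hf n)) hδ hstep), fun x => ?_⟩
  have hsum : HasSum (fun n => f (n + 1) x - f n x) (∑' n, (f (n + 1) x - f n x)) :=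
    (Summable.of_norm_bounded hδ fun n => hstep n x).hasSum
  have := hsum.tendsto_sum_nat.const_add (f 0 x)
  simp only [Finset.sum_range_sub (fun n => f n x), add_sub_cancel] at this
  exact this

lemma apply_eq_mul_of_tendsto {T : X → X} {lam : R} {f : ℕ → X → R} {g : X → R}
    (hlim : ∀ x, Tendsto (fun n => f n x) atTop (𝓝 (g x))) {ε : ℕ → ℝ}
    (hε : Tendsto ε atTop (𝓝 0)) (happrox : ∀ n x, ‖f n (T x) - lam * f n x‖ ≤ ε n) (x : X) :
    g (T x) = lam * g x :=
  sub_eq_zero.mp <| tendsto_nhds_unique ((hlim (T x)).sub ((hlim x).const_mul lam))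
    (squeeze_zero_norm (happrox · x) hε)

end ApproximateEigenfunctions

namespace LRCantor

variable {X : Type*} [TopologicalSpace X] {T : X ≃ₜ X} {L : ℕ} (S : LRCantor X T L)

noncomputable def tower (n : ℕ) (x : X) : Fin (S.C n) :=
  (S.pieces_cover n x).choose

noncomputable def level (n : ℕ) (x : X) : ℕ :=
  (S.pieces_cover n x).choose_spec.choose

lemma level_lt_hgt (n : ℕ) (x : X) : S.level n x < S.hgt n (S.tower n x) :=
  (S.pieces_cover n x).choose_spec.choose_spec.1

lemma iterate_level_mem_base (n : ℕ) (x : X) :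
    (⇑T)^[S.level n x] x ∈ S.base n (S.tower n x) :=
  (S.pieces_cover n x).choose_spec.choose_spec.2

variable {S}

lemma tower_eq_and_level_eq {n : ℕ} {k : Fin (S.C n)} {j : ℕ} {x : X}
    (hj : j < S.hgt n k) (hx : (⇑T)^[j] x ∈ S.base n k) :
    S.tower n x = k ∧ S.level n x = j := by
  by_contra h
  refine Set.disjoint_left.mp (S.pieces_disjoint n k _ j _ hj (S.level_lt_hgt n x) ?_) hx
    (S.iterate_level_mem_base n x)
  rintro ⟨⟩
  exact h ⟨rfl, rfl⟩

lemma tower_apply_eq_and_level_apply_eq {n : ℕ} {x : X} (h : 0 < S.level n x) :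
    S.tower n (T x) = S.tower n x ∧ S.level n (T x) = S.level n x - 1 := by
  refine tower_eq_and_level_eq (by have := S.level_lt_hgt n x; omega) ?_
  rw [← Function.iterate_succ_apply, Nat.succ_eq_add_one, Nat.sub_add_cancel h]
  exact S.iterate_level_mem_base n x

lemma level_apply_eq_of_level_eq_zero {n : ℕ} {x : X} (h : S.level n x = 0) :
    S.level n (T x) = S.hgt n (S.tower n (T x)) - 1 := by
  by_contra hne
  have hlt : S.level n (T x) + 1 < S.hgt n (S.tower n (T x)) := by
    have := S.level_lt_hgt n (T x); omega
  have hmem : (⇑T)^[S.level n (T x) + 1] x ∈ S.base n (S.tower n (T x)) :=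
    S.iterate_level_mem_base n (T x)
  have := (tower_eq_and_level_eq hlt hmem).2
  omega

lemma isLocallyConstant_level (n : ℕ) : IsLocallyConstant (S.level n) :=
  (IsLocallyConstant.iff_exists_open _).mpr fun x =>
    ⟨(⇑T)^[S.level n x] ⁻¹' S.base n (S.tower n x),
      ((S.clopen n _).preimage (T.continuous.iterate _)).isOpen, S.iterate_level_mem_base n x,
      fun _ hy => (tower_eq_and_level_eq (S.level_lt_hgt n x) hy).2⟩

lemma exists_level_add_sum_hgt_eq_level_succ (n : ℕ) (x : X) :
    ∃ l : List (Fin (S.C n)), S.level n x + (l.map (S.hgt n)).sum = S.level (n + 1) x := by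
  induction hj : S.level (n + 1) x generalizing x with
  | zero =>
    have hx : x ∈ S.base (n + 1) (S.tower (n + 1) x) := by
      simpa [hj] using S.iterate_level_mem_base (n + 1) x
    obtain ⟨k, hk⟩ := Set.mem_iUnion.mp (S.KR1 n (Set.mem_iUnion.mpr ⟨_, hx⟩))
    exact ⟨[], by simpa using (tower_eq_and_level_eq (j := 0) (S.hgt_pos n k) hk).2⟩
  | succ j ih =>
    obtain ⟨l, hl⟩ := ih (T x)
      (by rw [(tower_apply_eq_and_level_apply_eq (by omega)).2, hj]; rfl)
    rcases Nat.eq_zero_or_pos (S.level n x) with h0 | hpos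
    · refine ⟨S.tower n (T x) :: l, ?_⟩
      have := S.hgt_pos n (S.tower n (T x))
      rw [level_apply_eq_of_level_eq_zero h0] at hl
      simp only [List.map_cons, List.sum_cons]
      omega
    · refine ⟨l, ?_⟩
      rw [(tower_apply_eq_and_level_apply_eq hpos).2] at hl
      omega

lemma length_le_of_sum_hgt_le {n : ℕ} {l : List (Fin (S.C n))} {k : Fin (S.C (n + 1))}
    (hl : (l.map (S.hgt n)).sum ≤ S.hgt (n + 1) k) : l.length ≤ L := by
  have hmul : ∀ l : List (Fin (S.C n)),
      l.length * S.hgt (n + 1) k ≤ L * (l.map (S.hgt n)).sum := by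
    intro l
    induction l with
    | nil => simp
    | cons a l ih =>
      simp only [List.length_cons, List.map_cons, List.sum_cons]
      have := S.LR n k a
      nlinarith
  exact Nat.le_of_mul_le_mul_right ((hmul l).trans (Nat.mul_le_mul_left L hl)) (S.hgt_pos _ k)

variable {𝕜 : Type*} [NormedDivisionRing 𝕜] {z : 𝕜} {n : ℕ} {ε : ℝ}

lemma norm_pow_level_succ_sub_pow_level_le (hz : ‖z‖ = 1)
    (hε : ∀ k, ‖z ^ S.hgt n k - 1‖ ≤ ε) (x : X) :
    ‖z ^ S.level (n + 1) x - z ^ S.level n x‖ ≤ L * ε := by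
  obtain ⟨l, hl⟩ := S.exists_level_add_sum_hgt_eq_level_succ n x
  have hlen : l.length ≤ L := length_le_of_sum_hgt_le (k := S.tower (n + 1) x)
    (by have := S.level_lt_hgt (n + 1) x; omega)
  have hε0 : 0 ≤ ε := (norm_nonneg _).trans (hε (S.tower n x))
  have hsum := norm_pow_sum_sub_one_le hz (l := l.map (S.hgt n)) (ε := ε)
    (List.forall_mem_map.mpr fun k _ => hε k)
  rw [List.length_map] at hsum
  calc ‖z ^ S.level (n + 1) x - z ^ S.level n x‖
      = ‖z ^ S.level n x * (z ^ (l.map (S.hgt n)).sum - 1)‖ := by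
        rw [← hl, pow_add, mul_sub_one]
    _ = ‖z ^ (l.map (S.hgt n)).sum - 1‖ := by rw [norm_mul, norm_pow, hz, one_pow, one_mul]
    _ ≤ L * ε := hsum.trans (mul_le_mul_of_nonneg_right (by exact_mod_cast hlen) hε0)

lemma norm_pow_level_apply_sub_le (hz : ‖z‖ = 1) (hε : ∀ k, ‖z ^ S.hgt n k - 1‖ ≤ ε) (x : X) :
    ‖z ^ S.level n (T x) - z⁻¹ * z ^ S.level n x‖ ≤ ε := by
  have hz0 : z ≠ 0 := norm_ne_zero_iff.mp (by rw [hz]; exact one_ne_zero)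
  have hpred : ∀ m, 0 < m → z⁻¹ * z ^ m = z ^ (m - 1) := fun m hm => by
    rw [← Nat.sub_add_cancel hm, pow_succ', inv_mul_cancel_left₀ hz0, Nat.add_sub_cancel]
  rcases Nat.eq_zero_or_pos (S.level n x) with h0 | hpos
  -- from the base, `T` moves to the top level `h - 1` of a tower, where `z ^ (h - 1) - z⁻¹`
  -- is `z⁻¹ * (z ^ h - 1)`
  · rw [level_apply_eq_of_level_eq_zero h0, h0, pow_zero, mul_one,
      ← hpred _ (S.hgt_pos _ _), ← mul_sub_one, norm_mul, norm_inv, hz, inv_one, one_mul]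
    exact hε _
  · rw [(tower_apply_eq_and_level_apply_eq hpos).2, hpred _ hpos, sub_self, norm_zero]
    exact (norm_nonneg _).trans (hε (S.tower n x))

end LRCantor

variable {X : Type*} [TopologicalSpace X] [CompactSpace X] [TopologicalSpace.MetrizableSpace X]
  [TotallyDisconnectedSpace X] [PerfectSpace X] [Nonempty X]
theorem isContinuousEigenvalue_of_summable_general
    (T : X ≃ₜ X) {L : ℕ} (S : LRCantor X T L)
    (lam : ℂ)
    (hsum : Summable fun n : ℕ =>
      ⨆ k : Fin (S.C n), ‖lam ^ S.hgt n k - 1‖) :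
    IsContinuousEigenvalue T lam := by
  set ε := fun n : ℕ => ⨆ k : Fin (S.C n), ‖lam ^ S.hgt n k - 1‖
  have hε : ∀ n k, ‖lam ^ S.hgt n k - 1‖ ≤ ε n := fun n k =>
    le_ciSup (f := fun k => ‖lam ^ S.hgt n k - 1‖) (Finite.bddAbove_range _) k
  have hε0 : Tendsto ε atTop (𝓝 0) := hsum.tendsto_atTop_zero
  have hlam : ‖lam‖ = 1 := norm_eq_one_of_tendsto_norm_pow_sub_one
    (fun n => S.hgt_pos n ⟨0, S.C_pos n⟩)
    (squeeze_zero (fun _ => norm_nonneg _) (fun n => hε n _) hε0)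
  have hz : ‖lam⁻¹‖ = 1 := by rw [norm_inv, hlam, inv_one]
  have hεz : ∀ n k, ‖lam⁻¹ ^ S.hgt n k - 1‖ ≤ ε n := fun n k =>
    (norm_inv_pow_sub_one hlam _).trans_le (hε n k)
  obtain ⟨f, hf, hlim⟩ :=
    exists_continuous_tendsto_of_norm_sub_le (f := fun n x => lam⁻¹ ^ S.level n x)
      (fun n => ((S.isLocallyConstant_level n).comp (lam⁻¹ ^ ·)).continuous)
      (hsum.mul_left (L : ℝ)) fun n => S.norm_pow_level_succ_sub_pow_level_le hz (hεz n)
  refine ⟨f, hf, fun hf0 => ?_, apply_eq_mul_of_tendsto hlim hε0 fun n x => by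
    simpa only [inv_inv] using S.norm_pow_level_apply_sub_le hz (hεz n) x⟩
  obtain ⟨x⟩ := ‹Nonempty X›
  have hnorm := (hlim x).norm
  simp only [norm_pow, hz, one_pow, hf0, Pi.zero_apply, norm_zero] at hnorm
  exact one_ne_zero (tendsto_nhds_unique tendsto_const_nhds hnorm)

/-- If `∑_n max_k |λ^{h_k(n)} - 1| < ∞`, then `λ` is a continuous
eigenvalue of the linearly recurrent minimal Cantor system `(X,T)`. -/
theorem isContinuousEigenvalue_of_summable
    (T : X ≃ₜ X) (hmin : IsMinimal T) {L : ℕ} (S : LRCantor X T L)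
    (lam : ℂ)
    (hsum : Summable fun n : ℕ =>
      ⨆ k : Fin (S.C n), ‖lam ^ S.hgt n k - 1‖) :
    IsContinuousEigenvalue T lam :=
  isContinuousEigenvalue_of_summable_general T S lam hsum
end
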